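/- Let σ > 0, ν > 0, β ≥ 0, and let μ, f, M be real numbers with |μ − f| ≤ β σ. Set u = (μ − M)/σ, I = max(0, f − M), and EI = ν σ τ(u/ν), where τ(z) = z Φ(z) + φ(z). Then max( I − β σ, (τ(−β/ν) / τ(β/ν)) · I ) ≤ EI ≤ I + (β + ν) σ. -/

import Mathlib

/-!
Write `EI = s τ(x/s)` with `s = νσ` and `x = μ − M`, so that `f − M` lies within `βσ = s b`
(`b = β/ν`) of `x`. Since `τ' = Φ ∈ (0, 1)` and `τ(z) − τ(−z) = z`, one has
`max(z, 0) ≤ τ(z) ≤ max(z, 0) + φ(0)`, which gives the two additive bounds.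

The multiplicative bound rests on the log-concavity of `τ`, i.e. `φ τ ≤ Φ²`: the functions
`Φ² − φτ` and `Φ + zτ` vanish at `−∞` and have derivatives `φ (Φ + zτ)` and `2τ`, so both are
nonnegative. Log-concavity makes `t ↦ τ(t)/τ(t + b)` increasing, whence for `t ≥ −b`
`τ(−b)(t + b) ≤ τ(−b) τ(t + b) ≤ τ(t) τ(0) ≤ τ(t) τ(b)`.
-/

open MeasureTheory Real Set Filter Topology ProbabilityTheory

/-- The standard normal density `φ`. -/
noncomputable def stdNormalPdf (z : ℝ) : ℝ :=
  (Real.sqrt (2 * Real.pi))⁻¹ * Real.exp (-z ^ 2 / 2)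

/-- The standard normal cumulative distribution function `Φ`. -/
noncomputable def stdNormalCdf (z : ℝ) : ℝ := ∫ t in Set.Iic z, stdNormalPdf t

/-- `τ(z) = z Φ(z) + φ(z)`. -/
noncomputable def tauEI (z : ℝ) : ℝ := z * stdNormalCdf z + stdNormalPdf z

lemma stdNormalPdf_eq_gaussianPDFReal : stdNormalPdf = gaussianPDFReal 0 1 := by
  ext z
  simp [stdNormalPdf, gaussianPDFReal]

lemma stdNormalPdf_pos (z : ℝ) : 0 < stdNormalPdf z := by
  unfold stdNormalPdf
  positivity

lemma stdNormalPdf_neg (z : ℝ) : stdNormalPdf (-z) = stdNormalPdf z := by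
  simp [stdNormalPdf]

lemma stdNormalPdf_zero_le_one : stdNormalPdf 0 ≤ 1 := by
  have h : 1 ≤ √(2 * π) := one_le_sqrt.mpr (by linarith [pi_gt_three])
  simpa [stdNormalPdf] using inv_le_one_of_one_le₀ h

lemma integrable_stdNormalPdf : Integrable stdNormalPdf := by
  rw [stdNormalPdf_eq_gaussianPDFReal]
  exact integrable_gaussianPDFReal 0 1

lemma integral_stdNormalPdf : ∫ z, stdNormalPdf z = 1 := by
  rw [stdNormalPdf_eq_gaussianPDFReal]
  exact integral_gaussianPDFReal_eq_one 0 one_ne_zero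

lemma integrable_id_mul_stdNormalPdf : Integrable fun t => t * stdNormalPdf t := by
  convert (integrable_mul_exp_neg_mul_sq (one_half_pos (α := ℝ))).const_mul (√(2 * π))⁻¹
    using 2 with t
  simp only [stdNormalPdf]
  ring_nf

lemma hasDerivAt_stdNormalPdf (z : ℝ) : HasDerivAt stdNormalPdf (-z * stdNormalPdf z) z := by
  have h : HasDerivAt (fun z : ℝ => -z ^ 2 / 2) (-z) z :=
    ((hasDerivAt_pow 2 z).fun_neg.div_const 2).congr_deriv (by ring)
  exact (h.exp.const_mul _).congr_deriv (by unfold stdNormalPdf; ring)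

lemma tendsto_abs_rpow_mul_stdNormalPdf (s : ℝ) :
    Tendsto (fun z => |z| ^ s * stdNormalPdf z) (cocompact ℝ) (𝓝 0) := by
  have h := (tendsto_rpow_abs_mul_exp_neg_mul_sq_cocompact (one_half_pos (α := ℝ)) s).const_mul
    (√(2 * π))⁻¹
  rw [mul_zero] at h
  refine h.congr fun z => ?_
  simp only [stdNormalPdf]
  ring_nf

lemma tendsto_stdNormalPdf_atBot : Tendsto stdNormalPdf atBot (𝓝 0) := by
  simpa using (tendsto_abs_rpow_mul_stdNormalPdf 0).mono_left atBot_le_cocompact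

lemma tendsto_id_mul_stdNormalPdf_atBot :
    Tendsto (fun z => z * stdNormalPdf z) atBot (𝓝 0) := by
  refine (tendsto_zero_iff_abs_tendsto_zero _).mpr ?_
  refine ((tendsto_abs_rpow_mul_stdNormalPdf 1).mono_left atBot_le_cocompact).congr fun z => ?_
  simp [abs_mul, abs_of_pos (stdNormalPdf_pos z)]

lemma stdNormalCdf_add_stdNormalCdf_neg (z : ℝ) : stdNormalCdf z + stdNormalCdf (-z) = 1 := by
  have h : stdNormalCdf (-z) = ∫ t in Ioi z, stdNormalPdf t := by
    rw [stdNormalCdf, ← integral_comp_neg_Ioi]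
    simp [stdNormalPdf_neg]
  rw [h, stdNormalCdf, intervalIntegral.integral_Iic_add_Ioi integrable_stdNormalPdf.integrableOn
    integrable_stdNormalPdf.integrableOn, integral_stdNormalPdf]

lemma hasDerivAt_stdNormalCdf (z : ℝ) : HasDerivAt stdNormalCdf (stdNormalPdf z) z := by
  have h : stdNormalCdf = fun x => stdNormalCdf 0 + ∫ t in (0 : ℝ)..x, stdNormalPdf t := by
    ext x
    rw [← intervalIntegral.integral_Iic_sub_Iic integrable_stdNormalPdf.integrableOn
      integrable_stdNormalPdf.integrableOn, stdNormalCdf, stdNormalCdf]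
    ring
  have hcont : Continuous stdNormalPdf := by unfold stdNormalPdf; fun_prop
  rw [h]
  exact (hcont.integral_hasStrictDerivAt 0 z).hasDerivAt.const_add _

lemma setIntegral_Iic_pos {g : ℝ → ℝ} {z : ℝ} (hg : IntegrableOn g (Iic z))
    (hpos : ∀ t < z, 0 < g t) (hnonneg : 0 ≤ g z) : 0 < ∫ t in Iic z, g t := by
  have hle : ∀ t ∈ Iic z, 0 ≤ g t := fun t ht =>
    (eq_or_lt_of_le (mem_Iic.mp ht)).elim (fun h => h ▸ hnonneg) fun h => (hpos t h).le
  rw [setIntegral_pos_iff_support_of_nonneg_ae ((ae_restrict_iff' measurableSet_Iic).mpr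
    (ae_of_all _ hle)) hg]
  calc (0 : ENNReal) < volume (Iio z) := by simp
    _ ≤ volume (Function.support g ∩ Iic z) :=
      measure_mono fun t ht => ⟨(hpos t ht).ne', mem_Iic.mpr (le_of_lt ht)⟩

lemma stdNormalCdf_pos (z : ℝ) : 0 < stdNormalCdf z :=
  setIntegral_Iic_pos integrable_stdNormalPdf.integrableOn (fun t _ => stdNormalPdf_pos t)
    (stdNormalPdf_pos z).le

lemma setIntegral_Iic_id_mul_stdNormalPdf (z : ℝ) :
    ∫ t in Iic z, t * stdNormalPdf t = -stdNormalPdf z := by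
  have h := integral_Iic_of_hasDerivAt_of_tendsto (f := fun t => -stdNormalPdf t)
    (hasDerivAt_stdNormalPdf z).continuousAt.neg.continuousWithinAt
    (fun t _ => by simpa using (hasDerivAt_stdNormalPdf t).fun_neg)
    integrable_id_mul_stdNormalPdf.integrableOn (by simpa using tendsto_stdNormalPdf_atBot.neg)
  simpa using h

lemma tauEI_eq_setIntegral (z : ℝ) : tauEI z = ∫ t in Iic z, (z - t) * stdNormalPdf t := by
  simp_rw [sub_mul]
  rw [integral_sub (integrable_stdNormalPdf.integrableOn.const_mul z)
    integrable_id_mul_stdNormalPdf.integrableOn, integral_const_mul,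
    setIntegral_Iic_id_mul_stdNormalPdf, tauEI, stdNormalCdf, sub_neg_eq_add]

lemma tauEI_pos (z : ℝ) : 0 < tauEI z := by
  rw [tauEI_eq_setIntegral]
  refine setIntegral_Iic_pos ?_ (fun t ht => mul_pos (sub_pos.mpr ht) (stdNormalPdf_pos t))
    (by simp)
  simp_rw [sub_mul]
  exact (integrable_stdNormalPdf.integrableOn.const_mul z).sub
    integrable_id_mul_stdNormalPdf.integrableOn

lemma hasDerivAt_tauEI (z : ℝ) : HasDerivAt tauEI (stdNormalCdf z) z :=
  (((hasDerivAt_id z).mul (hasDerivAt_stdNormalCdf z)).add (hasDerivAt_stdNormalPdf z)).congr_deriv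
    (by simp)

lemma monotone_tauEI : Monotone tauEI :=
  monotone_of_hasDerivAt_nonneg hasDerivAt_tauEI fun z => (stdNormalCdf_pos z).le

lemma tauEI_sub_tauEI_neg (z : ℝ) : tauEI z - tauEI (-z) = z := by
  have hΦ := stdNormalCdf_add_stdNormalCdf_neg z
  simp only [tauEI, stdNormalPdf_neg]
  linear_combination z * hΦ

lemma max_le_tauEI (z : ℝ) : max z 0 ≤ tauEI z :=
  max_le (by linarith [tauEI_sub_tauEI_neg z, tauEI_pos (-z)]) (tauEI_pos z).le

lemma tauEI_le (z : ℝ) : tauEI z ≤ max z 0 + stdNormalPdf 0 := by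
  have hτ0 : tauEI 0 = stdNormalPdf 0 := by simp [tauEI]
  rcases le_total z 0 with hz | hz
  · linarith [monotone_tauEI hz, le_max_right z 0]
  · linarith [monotone_tauEI (neg_nonpos.mpr hz), tauEI_sub_tauEI_neg z, le_max_left z 0]

lemma tauEI_le_stdNormalPdf {z : ℝ} (hz : z ≤ 0) : tauEI z ≤ stdNormalPdf z := by
  have := mul_nonpos_of_nonpos_of_nonneg hz (stdNormalCdf_pos z).le
  simp only [tauEI]
  linarith

lemma tendsto_stdNormalCdf_atBot : Tendsto stdNormalCdf atBot (𝓝 0) := by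
  refine tendsto_of_tendsto_of_tendsto_of_le_of_le' tendsto_const_nhds tendsto_stdNormalPdf_atBot
    (.of_forall fun z => (stdNormalCdf_pos z).le) ?_
  filter_upwards [eventually_le_atBot (-1 : ℝ)] with z hz
  have hmills : -z * stdNormalCdf z ≤ stdNormalPdf z := by
    have := tauEI_pos z
    rw [tauEI] at this
    linarith
  exact (le_mul_of_one_le_left (stdNormalCdf_pos z).le (by linarith)).trans hmills

lemma tendsto_tauEI_atBot : Tendsto tauEI atBot (𝓝 0) :=
  tendsto_of_tendsto_of_tendsto_of_le_of_le' tendsto_const_nhds tendsto_stdNormalPdf_atBot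
    (.of_forall fun z => (tauEI_pos z).le)
    (by filter_upwards [eventually_le_atBot 0] with z hz using tauEI_le_stdNormalPdf hz)

lemma tendsto_id_mul_tauEI_atBot : Tendsto (fun z => z * tauEI z) atBot (𝓝 0) := by
  refine tendsto_of_tendsto_of_tendsto_of_le_of_le' tendsto_id_mul_stdNormalPdf_atBot
    tendsto_const_nhds ?_ ?_
  all_goals filter_upwards [eventually_le_atBot 0] with z hz
  · exact mul_le_mul_of_nonpos_left (tauEI_le_stdNormalPdf hz) hz
  · exact mul_nonpos_of_nonpos_of_nonneg hz (tauEI_pos z).le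

lemma stdNormalCdf_add_mul_tauEI_nonneg (z : ℝ) : 0 ≤ stdNormalCdf z + z * tauEI z := by
  have hderiv : ∀ x, HasDerivAt (fun x => stdNormalCdf x + x * tauEI x) (2 * tauEI x) x :=
    fun x => ((hasDerivAt_stdNormalCdf x).add ((hasDerivAt_id x).mul (hasDerivAt_tauEI x)))
      |>.congr_deriv (by simp only [tauEI, id]; ring)
  have hlim : Tendsto (fun x => stdNormalCdf x + x * tauEI x) atBot (𝓝 0) := by
    simpa using tendsto_stdNormalCdf_atBot.add tendsto_id_mul_tauEI_atBot
  exact (monotone_of_hasDerivAt_nonneg hderiv fun x => mul_nonneg zero_le_two (tauEI_pos x).le)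
    |>.le_of_tendsto hlim z

lemma stdNormalPdf_mul_tauEI_le_sq (z : ℝ) : stdNormalPdf z * tauEI z ≤ stdNormalCdf z ^ 2 := by
  have hderiv : ∀ x, HasDerivAt (fun x => stdNormalCdf x ^ 2 - stdNormalPdf x * tauEI x)
      (stdNormalPdf x * (stdNormalCdf x + x * tauEI x)) x :=
    fun x => (((hasDerivAt_stdNormalCdf x).pow 2).sub
      ((hasDerivAt_stdNormalPdf x).mul (hasDerivAt_tauEI x))).congr_deriv
        (by simp only [tauEI]; ring)
  have hlim : Tendsto (fun x => stdNormalCdf x ^ 2 - stdNormalPdf x * tauEI x) atBot (𝓝 0) := by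
    simpa using (tendsto_stdNormalCdf_atBot.pow 2).sub
      (tendsto_stdNormalPdf_atBot.mul tendsto_tauEI_atBot)
  have := (monotone_of_hasDerivAt_nonneg hderiv fun x => mul_nonneg (stdNormalPdf_pos x).le
    (stdNormalCdf_add_mul_tauEI_nonneg x)).le_of_tendsto hlim z
  linarith

lemma antitone_stdNormalCdf_div_tauEI : Antitone fun z => stdNormalCdf z / tauEI z := by
  refine antitone_of_hasDerivAt_nonpos
    (fun z => (hasDerivAt_stdNormalCdf z).div (hasDerivAt_tauEI z) (tauEI_pos z).ne') fun z => ?_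
  have := stdNormalPdf_mul_tauEI_le_sq z
  exact div_nonpos_of_nonpos_of_nonneg (by nlinarith) (sq_nonneg _)

lemma monotone_div_comp_add_of_antitone_logDeriv {f f' : ℝ → ℝ}
    (hf : ∀ x, HasDerivAt f (f' x) x) (hpos : ∀ x, 0 < f x)
    (hanti : Antitone fun x => f' x / f x) {b : ℝ} (hb : 0 ≤ b) :
    Monotone fun x => f x / f (x + b) := by
  refine monotone_of_hasDerivAt_nonneg (fun x => (hf x).div
    (((hf (x + b)).comp x ((hasDerivAt_id x).add_const b)).congr_deriv (mul_one _))
    (hpos (x + b)).ne') fun x => div_nonneg ?_ (sq_nonneg _)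
  have h : f' (x + b) / f (x + b) ≤ f' x / f x := hanti (le_add_of_nonneg_right hb)
  rw [div_le_div_iff₀ (hpos (x + b)) (hpos x)] at h
  linarith

lemma tauEI_neg_mul_le {b t : ℝ} (hb : 0 ≤ b) (ht : -b ≤ t) :
    tauEI (-b) * (t + b) ≤ tauEI t * tauEI b := by
  have hratio : tauEI (-b) / tauEI (-b + b) ≤ tauEI t / tauEI (t + b) :=
    monotone_div_comp_add_of_antitone_logDeriv hasDerivAt_tauEI tauEI_pos
      antitone_stdNormalCdf_div_tauEI hb ht
  rw [neg_add_cancel, div_le_div_iff₀ (tauEI_pos 0) (tauEI_pos (t + b))] at hratio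
  calc tauEI (-b) * (t + b) ≤ tauEI (-b) * tauEI (t + b) :=
        mul_le_mul_of_nonneg_left ((le_max_left _ _).trans (max_le_tauEI _)) (tauEI_pos _).le
    _ ≤ tauEI t * tauEI 0 := hratio
    _ ≤ tauEI t * tauEI b := mul_le_mul_of_nonneg_left (monotone_tauEI hb) (tauEI_pos _).le

lemma max_le_mul_tauEI_div {s : ℝ} (hs : 0 < s) (x : ℝ) : max x 0 ≤ s * tauEI (x / s) :=
  calc max x 0 = s * max (x / s) 0 := by
        rw [mul_max_of_nonneg _ _ hs.le, mul_div_cancel₀ _ hs.ne', mul_zero]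
    _ ≤ s * tauEI (x / s) := mul_le_mul_of_nonneg_left (max_le_tauEI _) hs.le

lemma mul_tauEI_div_le {s : ℝ} (hs : 0 < s) (x : ℝ) : s * tauEI (x / s) ≤ max x 0 + s :=
  calc s * tauEI (x / s) ≤ s * (max (x / s) 0 + 1) :=
        mul_le_mul_of_nonneg_left ((tauEI_le _).trans (by linarith [stdNormalPdf_zero_le_one]))
          hs.le
    _ = max x 0 + s := by rw [mul_add, mul_max_of_nonneg _ _ hs.le, mul_div_cancel₀ _ hs.ne',
        mul_zero, mul_one]

lemma tauEI_neg_mul_le_mul_tauEI_div {s b x : ℝ} (hs : 0 < s) (hb : 0 ≤ b) (hx : -(s * b) ≤ x) :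
    tauEI (-b) * (x + s * b) ≤ s * tauEI (x / s) * tauEI b := by
  have ht : -b ≤ x / s := by rw [le_div_iff₀ hs]; linarith
  calc tauEI (-b) * (x + s * b) = s * (tauEI (-b) * (x / s + b)) := by field_simp
    _ ≤ s * (tauEI (x / s) * tauEI b) := mul_le_mul_of_nonneg_left (tauEI_neg_mul_le hb ht) hs.le
    _ = s * tauEI (x / s) * tauEI b := by ring

/-- If `|μ − f| ≤ βσ`, `u = (μ − M)/σ`, `I = max(0, f − M)` and
`EI = νσ τ(u/ν)`, then `max(I − βσ, (τ(−β/ν)/τ(β/ν)) I) ≤ EI ≤ I + (β + ν)σ`. -/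
theorem expected_improvement_bounds
    (σ ν β μ f M : ℝ) (hσ : 0 < σ) (hν : 0 < ν) (hβ : 0 ≤ β)
    (hconc : |μ - f| ≤ β * σ) :
    let u : ℝ := (μ - M) / σ
    let I : ℝ := max 0 (f - M)
    let EI : ℝ := ν * σ * tauEI (u / ν)
    max (I - β * σ) ((tauEI (-β / ν) / tauEI (β / ν)) * I) ≤ EI ∧
      EI ≤ I + (β + ν) * σ := by
  intro u I EI
  obtain ⟨hμf, hfμ⟩ := abs_le.mp hconc
  have hs : 0 < ν * σ := mul_pos hν hσ
  have hEI : EI = ν * σ * tauEI ((μ - M) / (ν * σ)) := by simp only [EI, u, div_div, mul_comm σ ν]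
  have hβσ : β * σ = ν * σ * (β / ν) := by field_simp
  have hIμ : I ≤ max (μ - M) 0 + β * σ :=
    max_le (by positivity) (by linarith [le_max_left (μ - M) 0])
  have hμI : max (μ - M) 0 ≤ I + β * σ :=
    max_le (by linarith [le_max_right 0 (f - M)]) (by positivity)
  refine ⟨max_le ?_ ?_, ?_⟩
  · linarith [hEI ▸ max_le_mul_tauEI_div hs (μ - M)]
  · rw [neg_div, div_mul_eq_mul_div, div_le_iff₀ (tauEI_pos _), hEI]
    rcases le_total (f - M) 0 with hfM | hfM
    · rw [show I = 0 from max_eq_left hfM, mul_zero]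
      exact mul_nonneg (mul_nonneg hs.le (tauEI_pos _).le) (tauEI_pos _).le
    · calc tauEI (-(β / ν)) * I ≤ tauEI (-(β / ν)) * (μ - M + ν * σ * (β / ν)) :=
            mul_le_mul_of_nonneg_left (by rw [show I = f - M from max_eq_right hfM]; linarith)
              (tauEI_pos _).le
        _ ≤ _ := tauEI_neg_mul_le_mul_tauEI_div hs (by positivity) (by linarith)
  · linarith [hEI ▸ mul_tauEI_div_le hs (μ - M)]
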